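/- If a transition t with label α is not 1-live in the subnet Σ^Λ composed of all agents whose alphabets intersect a label set Λ containing α, then no global transition of the full composition Σ that projects to t is 1-live in Σ. (Adding more synchronizing agents can only restrict firability.) -/
import Mathlib


/-- A Petri net system: places `P`, transitions `T`, flow relation encoded by
presets and postsets, and an initial marking. -/
structure PetriNet (P T : Type*) where
  pre : T → Set P
  post : T → Set P
  m0 : P → ℕ

namespace PetriNet

variable {P T : Type*}

def enabled (N : PetriNet P T) (m : P → ℕ) (t : T) : Prop :=
  ∀ p ∈ N.pre t, 1 ≤ m p

open Classical in
noncomputable def fire (N : PetriNet P T) (m : P → ℕ) (t : T) : P → ℕ :=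
  fun p =>
    if p ∈ N.pre t ∧ p ∉ N.post t then m p - 1
    else if p ∈ N.post t ∧ p ∉ N.pre t then m p + 1
    else m p

def step (N : PetriNet P T) (m m' : P → ℕ) : Prop :=
  ∃ t, N.enabled m t ∧ m' = N.fire m t

def Reachable (N : PetriNet P T) (m : P → ℕ) : Prop :=
  Relation.ReflTransGen N.step N.m0 m

def OneSafe (N : PetriNet P T) : Prop :=
  ∀ m, N.Reachable m → ∀ p, m p ≤ 1

/-- `t` is 1-live if some reachable marking enables it. -/
def OneLive (N : PetriNet P T) (t : T) : Prop :=
  ∃ m, N.Reachable m ∧ N.enabled m t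

/-- The list of transitions `l` is a firing sequence from marking `m`. -/
def firesFrom (N : PetriNet P T) : (P → ℕ) → List T → Prop
  | _, [] => True
  | m, t :: ts => N.enabled m t ∧ N.firesFrom (N.fire m t) ts

end PetriNet

/-- A state-machine agent net: each transition has a single input place
(its source) and a single output place (its target), and carries a label. -/
structure Agent (Pl Tr Λ : Type*) where
  src : Tr → Pl
  tgt : Tr → Pl
  lab : Tr → Λ
  init : Pl

namespace Agent

variable {I Λ : Type*} {Pl Tr : I → Type*}

/-- A legal component of a global transition with label `α` in an agent:
either a transition of the agent labelled `α`, or no component when the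
agent's alphabet does not contain `α`. -/
def GoodComp {P T : Type*} (A : Agent P T Λ) (α : Λ) : Option T → Prop
  | some t => A.lab t = α
  | none => ¬ ∃ t : T, A.lab t = α

/-- A global transition of the fusion-composition of the agents indexed by
`S`: a label together with, for each participating agent whose alphabet
contains the label, one transition of that agent with this label (and no
component for the other agents). -/
def GTrans (A : ∀ i, Agent (Pl i) (Tr i) Λ) (S : Set I) : Type _ :=
  {q : Λ × (∀ i, Option (Tr i)) //
    ∀ i, (i ∈ S → (A i).GoodComp q.1 (q.2 i)) ∧ (i ∉ S → q.2 i = none)}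

open Classical in
/-- The fusion-composition of the agents indexed by `S`: places are the
(disjoint) places of the agents, transitions are the global transitions,
presets/postsets are the unions of the componentwise ones, and the initial
marking puts one token on each participating agent's initial place. -/
noncomputable def GlobalNet (A : ∀ i, Agent (Pl i) (Tr i) Λ) (S : Set I) :
    PetriNet (Σ i, Pl i) (GTrans A S) where
  pre q := {p : Σ i, Pl i | ∃ t : Tr p.1, q.1.2 p.1 = some t ∧ (A p.1).src t = p.2}
  post q := {p : Σ i, Pl i | ∃ t : Tr p.1, q.1.2 p.1 = some t ∧ (A p.1).tgt t = p.2}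
  m0 := fun p => if p.1 ∈ S ∧ p.2 = (A p.1).init then 1 else 0

/-- The set of agents whose alphabet intersects a set of labels `Λs`. -/
def agentsOf (A : ∀ i, Agent (Pl i) (Tr i) Λ) (Λs : Set Λ) : Set I :=
  {i | ∃ t : Tr i, (A i).lab t ∈ Λs}

open Classical in
/-- The projection of a global transition of the full composition onto the
subnet composed of the agents in `S`: the subtuple of the components
belonging to agents in `S`. -/
noncomputable def projT (A : ∀ i, Agent (Pl i) (Tr i) Λ) (S : Set I)
    (q : GTrans A Set.univ) : GTrans A S :=
  ⟨(q.1.1, fun i => if i ∈ S then q.1.2 i else none), by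
    intro i
    constructor
    · intro hi
      simp only [hi, if_pos]
      exact ((q.2 i).1 (Set.mem_univ i))
    · intro hi
      simp [hi]⟩

open Classical in
/-- The projection of a firing sequence of the full composition onto the
subnet composed of the agents in `S`: transitions with no component in the
agents of `S` are skipped, the rest are restricted to their `S`-components. -/
noncomputable def projSeq (A : ∀ i, Agent (Pl i) (Tr i) Λ) (S : Set I)
    (l : List (GTrans A Set.univ)) : List (GTrans A S) :=
  (l.filter (fun q => decide (∃ i ∈ S, (q.1.2 i).isSome))).map (projT A S)

end Agent

section Aux

open Agent

variable {I Λ : Type*} {Pl Tr : I → Type*} (A : ∀ i, Agent (Pl i) (Tr i) Λ)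
  (S : Set I)

open Classical in
/-- Restriction of a marking to the places of the agents in `S`. -/
noncomputable def projM (m : (Σ i, Pl i) → ℕ) : (Σ i, Pl i) → ℕ :=
  fun p => if p.1 ∈ S then m p else 0

lemma projM_m0 : projM S (GlobalNet A Set.univ).m0 = (GlobalNet A S).m0 := by
  funext p
  simp only [projM, GlobalNet]
  by_cases h : p.1 ∈ S <;> by_cases h2 : p.2 = (A p.1).init <;> simp [h, h2]

lemma pre_projT_iff (q : GTrans A Set.univ) (p : Σ i, Pl i) :
    p ∈ (GlobalNet A S).pre (projT A S q) ↔
      p.1 ∈ S ∧ p ∈ (GlobalNet A Set.univ).pre q := by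
  simp only [GlobalNet, projT, Set.mem_setOf_eq]
  by_cases h : p.1 ∈ S <;> simp [h]

lemma post_projT_iff (q : GTrans A Set.univ) (p : Σ i, Pl i) :
    p ∈ (GlobalNet A S).post (projT A S q) ↔
      p.1 ∈ S ∧ p ∈ (GlobalNet A Set.univ).post q := by
  simp only [GlobalNet, projT, Set.mem_setOf_eq]
  by_cases h : p.1 ∈ S <;> simp [h]

lemma enabled_projT {m : (Σ i, Pl i) → ℕ} {q : GTrans A Set.univ}
    (h : (GlobalNet A Set.univ).enabled m q) :
    (GlobalNet A S).enabled (projM S m) (projT A S q) := by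
  intro p hp
  rw [pre_projT_iff] at hp
  simpa [projM, hp.1] using h p hp.2

lemma fire_projT (m : (Σ i, Pl i) → ℕ) (q : GTrans A Set.univ) :
    projM S ((GlobalNet A Set.univ).fire m q) =
      (GlobalNet A S).fire (projM S m) (projT A S q) := by
  funext p
  by_cases h : p.1 ∈ S
  · have hpre : p ∈ (GlobalNet A S).pre (projT A S q) ↔
        p ∈ (GlobalNet A Set.univ).pre q := by
      rw [pre_projT_iff]; simp [h]
    have hpost : p ∈ (GlobalNet A S).post (projT A S q) ↔
        p ∈ (GlobalNet A Set.univ).post q := by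
      rw [post_projT_iff]; simp [h]
    by_cases h1 : p ∈ (GlobalNet A Set.univ).pre q <;>
      by_cases h2 : p ∈ (GlobalNet A Set.univ).post q <;>
      simp [PetriNet.fire, projM, h, h1, h2, hpre, hpost]
  · have hpre : p ∉ (GlobalNet A S).pre (projT A S q) := by
      rw [pre_projT_iff]; tauto
    have hpost : p ∉ (GlobalNet A S).post (projT A S q) := by
      rw [post_projT_iff]; tauto
    simp [PetriNet.fire, projM, h, hpre, hpost]

lemma reachable_projM {m : (Σ i, Pl i) → ℕ}
    (h : (GlobalNet A Set.univ).Reachable m) :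
    (GlobalNet A S).Reachable (projM S m) := by
  induction h with
  | refl => rw [projM_m0]; exact Relation.ReflTransGen.refl
  | tail _ hstep ih =>
    obtain ⟨q, hq, rfl⟩ := hstep
    exact ih.tail ⟨projT A S q, enabled_projT A S hq, fire_projT A S _ q⟩

end Aux

open Agent in
/-- If a transition `t` with label `α ∈ Λ` is not 1-live in the subnet `Σ^Λ`
composed of all agents whose alphabets intersect `Λ`, then no global
transition of the full composition `Σ` that projects to `t` is 1-live in
`Σ`. -/
theorem not_oneLive_of_not_oneLive_in_subnet
    {I Λ : Type*} {Pl Tr : I → Type*} (A : ∀ i, Agent (Pl i) (Tr i) Λ)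
    (Λs : Set Λ) (t : GTrans A (agentsOf A Λs)) (hα : t.1.1 ∈ Λs)
    (ht : ¬ (GlobalNet A (agentsOf A Λs)).OneLive t) :
    ∀ tG : GTrans A Set.univ, projT A (agentsOf A Λs) tG = t →
      ¬ (GlobalNet A Set.univ).OneLive tG := by
  rintro tG rfl ⟨m, hr, hen⟩
  exact ht ⟨projM (agentsOf A Λs) m, reachable_projM A _ hr,
    enabled_projT A _ hen⟩
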